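/- arXiv:1702.03750 — 2 statements merged into one kernel-verified Lean document; each statement's English description precedes it below -/
import Mathlib

section
/- Let n ≥ 2 and let W be a real symmetric n×n matrix. For θ ∈ ℝ, let T(θ) := G(1,2,θ)ᵀ W G(1,2,θ), and define h(θ) := Σ_{j=1}^n (T_{jj}(θ))². Then for every θ ∈ ℝ, writing T = T(θ): h'(θ) = 4 (T_{11} T_{12} − T_{12} T_{22}) and h''(θ) = −4 (T_{11}² + T_{22}² − 2 T_{11} T_{22} − 4 T_{12}²). -/
open Matrix Real Filter Set

attribute [local instance] Matrix.frobeniusNormedAddCommGroup Matrix.frobeniusNormedSpace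

noncomputable def frobInner {n : ℕ} (A B : Matrix (Fin n) (Fin n) ℝ) : ℝ :=
  ∑ i, ∑ j, A i j * B i j

noncomputable def frobNorm {n : ℕ} (A : Matrix (Fin n) (Fin n) ℝ) : ℝ :=
  Real.sqrt (∑ i, ∑ j, (A i j) ^ 2)

def SOn (n : ℕ) : Set (Matrix (Fin n) (Fin n) ℝ) := {Q | Qᵀ * Q = 1 ∧ Q.det = 1}

noncomputable def grad {n : ℕ} (f : Matrix (Fin n) (Fin n) ℝ → ℝ)
    (Q : Matrix (Fin n) (Fin n) ℝ) : Matrix (Fin n) (Fin n) ℝ :=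
  Matrix.of fun k l => fderiv ℝ f Q (Matrix.single k l 1)

noncomputable def Lam {n : ℕ} (f : Matrix (Fin n) (Fin n) ℝ → ℝ)
    (Q : Matrix (Fin n) (Fin n) ℝ) : Matrix (Fin n) (Fin n) ℝ :=
  (1 / 2 : ℝ) • (Qᵀ * grad f Q - (grad f Q)ᵀ * Q)

noncomputable def projGrad {n : ℕ} (f : Matrix (Fin n) (Fin n) ℝ → ℝ)
    (Q : Matrix (Fin n) (Fin n) ℝ) : Matrix (Fin n) (Fin n) ℝ := Q * Lam f Q

noncomputable def givens {n : ℕ} (i j : Fin n) (θ : ℝ) : Matrix (Fin n) (Fin n) ℝ :=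
  Matrix.of fun k l =>
    if k = i ∧ l = i then Real.cos θ
    else if k = j ∧ l = j then Real.cos θ
    else if k = j ∧ l = i then Real.sin θ
    else if k = i ∧ l = j then -Real.sin θ
    else if k = l then 1 else 0

def deltaMat {n : ℕ} (i j : Fin n) : Matrix (Fin n) (Fin n) ℝ :=
  Matrix.of fun k l => if k = j ∧ l = i then 1 else if k = i ∧ l = j then -1 else 0

/-!
With `Δ := deltaMat i j = E_ji - E_ij`, the Givens rotation satisfies `G' = G Δ`, and `Δ` is
skew, so `T = Gᵀ W G` solves the Lax equation `T' = T Δ - Δ T`. For symmetric `T` this reads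
`T'_ii = 2 T_ij`, `T'_jj = -2 T_ij`, `T'_ij = T_jj - T_ii`, and `T'_kk = 0` for the other
diagonal entries; both formulas follow from these by the product rule.
-/

section EntrywiseCalculus

variable {m p q : Type*} [Fintype p]

def HasCommutatorDerivAt (T : ℝ → Matrix p p ℝ) (K : Matrix p p ℝ) (t : ℝ) : Prop :=
  ∀ k l, HasDerivAt (fun s => T s k l) ((T t * K - K * T t) k l) t

theorem HasDerivAt.matrix_mul_apply {A : ℝ → Matrix m p ℝ} {B : ℝ → Matrix p q ℝ}
    {A' : Matrix m p ℝ} {B' : Matrix p q ℝ} {t : ℝ}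
    (hA : ∀ k l, HasDerivAt (fun s => A s k l) (A' k l) t)
    (hB : ∀ k l, HasDerivAt (fun s => B s k l) (B' k l) t) (k : m) (l : q) :
    HasDerivAt (fun s => (A s * B s) k l) ((A' * B t + A t * B') k l) t := by
  simp only [mul_apply, Matrix.add_apply, ← Finset.sum_add_distrib]
  exact HasDerivAt.fun_sum fun r _ => (hA k r).mul (hB r l)

theorem hasDerivAt_transpose_mul_mul_apply {G : ℝ → Matrix p p ℝ} {K W : Matrix p p ℝ}
    {t : ℝ} (hG : ∀ k l, HasDerivAt (fun s => G s k l) ((G t * K) k l) t) (k l : p) :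
    HasDerivAt (fun s => ((G s)ᵀ * W * G s) k l)
      ((Kᵀ * ((G t)ᵀ * W * G t) + (G t)ᵀ * W * G t * K) k l) t := by
  have hGt : ∀ k l, HasDerivAt (fun s => (G s)ᵀ k l) ((G t * K)ᵀ k l) t :=
    fun k l => hG l k
  have hW : ∀ k l, HasDerivAt (fun _ => W k l) ((0 : Matrix p p ℝ) k l) t :=
    fun k l => hasDerivAt_const t (W k l)
  convert (HasDerivAt.matrix_mul_apply (HasDerivAt.matrix_mul_apply hGt hW) hG) k l using 2 <;>
    simp only [transpose_mul, Matrix.mul_zero, add_zero, Matrix.mul_assoc]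

end EntrywiseCalculus

section Givens

variable {n : ℕ} {i j : Fin n}

theorem mul_deltaMat_apply (hij : i ≠ j) (A : Matrix (Fin n) (Fin n) ℝ) (k l : Fin n) :
    (A * deltaMat i j) k l = (if l = i then A k j else 0) - (if l = j then A k i else 0) := by
  by_cases hli : l = i
  · subst hli; simp [mul_apply, deltaMat, hij]
  · by_cases hlj : l = j
    · subst hlj; simp [mul_apply, deltaMat, hij.symm]
    · simp [mul_apply, deltaMat, hli, hlj]

theorem deltaMat_mul_apply (hij : i ≠ j) (A : Matrix (Fin n) (Fin n) ℝ) (k l : Fin n) :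
    (deltaMat i j * A) k l = (if k = j then A i l else 0) - (if k = i then A j l else 0) := by
  by_cases hki : k = i
  · subst hki; simp [mul_apply, deltaMat, hij]
  · by_cases hkj : k = j
    · subst hkj; simp [mul_apply, deltaMat, hij.symm]
    · simp [mul_apply, deltaMat, hki, hkj]

theorem deltaMat_transpose (hij : i ≠ j) : (deltaMat i j)ᵀ = -deltaMat i j := by
  ext k l
  simp only [transpose_apply, Matrix.neg_apply, deltaMat, of_apply]
  grind

theorem hasDerivAt_givens_apply (hij : i ≠ j) (t : ℝ) (k l : Fin n) :
    HasDerivAt (fun s => givens i j s k l) ((givens i j t * deltaMat i j) k l) t := by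
  rw [mul_deltaMat_apply hij]
  by_cases hli : l = i <;> by_cases hlj : l = j <;> by_cases hki : k = i <;> by_cases hkj : k = j <;>
    simp_all [givens, hij.symm]
  all_goals first
    | exact hasDerivAt_const t _
    | exact hasDerivAt_cos t
    | exact hasDerivAt_sin t
    | exact (hasDerivAt_sin t).neg

theorem hasCommutatorDerivAt_givens_conj (hij : i ≠ j) (W : Matrix (Fin n) (Fin n) ℝ) (t : ℝ) :
    HasCommutatorDerivAt (fun s => (givens i j s)ᵀ * W * givens i j s) (deltaMat i j) t := by
  intro k l
  convert hasDerivAt_transpose_mul_mul_apply (hasDerivAt_givens_apply hij t) k l using 2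
  rw [deltaMat_transpose hij, Matrix.neg_mul, sub_eq_neg_add]

end Givens

namespace HasCommutatorDerivAt

variable {n : ℕ} {i j : Fin n} {T : ℝ → Matrix (Fin n) (Fin n) ℝ} {t : ℝ}

theorem hasDerivAt_apply_ii (hT : HasCommutatorDerivAt T (deltaMat i j) t) (hij : i ≠ j)
    (hsymm : T t j i = T t i j) : HasDerivAt (fun s => T s i i) (2 * T t i j) t := by
  convert hT i i using 1
  simp [mul_deltaMat_apply hij, deltaMat_mul_apply hij, hij, hsymm]
  ring

theorem hasDerivAt_apply_jj (hT : HasCommutatorDerivAt T (deltaMat i j) t) (hij : i ≠ j)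
    (hsymm : T t j i = T t i j) : HasDerivAt (fun s => T s j j) (-2 * T t i j) t := by
  convert hT j j using 1
  simp [mul_deltaMat_apply hij, deltaMat_mul_apply hij, hij.symm, hsymm]
  ring

theorem hasDerivAt_apply_ij (hT : HasCommutatorDerivAt T (deltaMat i j) t) (hij : i ≠ j) :
    HasDerivAt (fun s => T s i j) (T t j j - T t i i) t := by
  convert hT i j using 1
  simp [mul_deltaMat_apply hij, deltaMat_mul_apply hij, hij, hij.symm]
  ring

theorem hasDerivAt_sum_diag_sq (hT : HasCommutatorDerivAt T (deltaMat i j) t) (hij : i ≠ j)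
    (hsymm : T t j i = T t i j) :
    HasDerivAt (fun s => ∑ k, T s k k ^ 2) (4 * (T t i i * T t i j - T t i j * T t j j)) t := by
  refine (HasDerivAt.fun_sum (u := Finset.univ) fun k _ => (hT k k).pow 2).congr_deriv ?_
  simp [mul_deltaMat_apply hij, deltaMat_mul_apply hij, mul_sub, mul_ite, Finset.sum_sub_distrib,
    hsymm]
  ring

theorem hasDerivAt_deriv_sum_diag_sq (hT : HasCommutatorDerivAt T (deltaMat i j) t)
    (hij : i ≠ j) (hsymm : T t j i = T t i j) :
    HasDerivAt (fun s => 4 * (T s i i * T s i j - T s i j * T s j j))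
      (-4 * (T t i i ^ 2 + T t j j ^ 2 - 2 * T t i i * T t j j - 4 * T t i j ^ 2)) t := by
  have hii := hT.hasDerivAt_apply_ii hij hsymm
  have hjj := hT.hasDerivAt_apply_jj hij hsymm
  have hij' := hT.hasDerivAt_apply_ij hij
  refine (((hii.mul hij').sub (hij'.mul hjj)).const_mul 4).congr_deriv ?_
  ring

end HasCommutatorDerivAt

theorem stmt_7_general {n : ℕ} (W : Matrix (Fin n) (Fin n) ℝ) (hW : Wᵀ = W)
    (i j : Fin n) (hi : (i : ℕ) = 0) (hj : (j : ℕ) = 1)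
    (T : ℝ → Matrix (Fin n) (Fin n) ℝ)
    (hT : ∀ θ, T θ = (givens i j θ)ᵀ * W * givens i j θ)
    (h : ℝ → ℝ) (hh : ∀ θ, h θ = ∑ s, (T θ s s) ^ 2) (θ : ℝ) :
    deriv h θ = 4 * (T θ i i * T θ i j - T θ i j * T θ j j) ∧
    deriv (deriv h) θ =
      -4 * ((T θ i i) ^ 2 + (T θ j j) ^ 2 - 2 * T θ i i * T θ j j - 4 * (T θ i j) ^ 2) := by
  have hij : i ≠ j := Fin.ne_of_val_ne (by omega)
  have hsymm : ∀ t, T t j i = T t i j := fun t => by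
    rw [hT, ← transpose_apply ((givens i j t)ᵀ * W * givens i j t) i j, transpose_mul,
      transpose_mul, hW, transpose_transpose, Matrix.mul_assoc]
  have hflow : ∀ t, HasCommutatorDerivAt T (deltaMat i j) t := fun t =>
    funext hT ▸ hasCommutatorDerivAt_givens_conj hij W t
  have hderiv : deriv h = fun t => 4 * (T t i i * T t i j - T t i j * T t j j) := by
    funext t
    rw [show h = fun s => ∑ k, T s k k ^ 2 from funext hh]
    exact ((hflow t).hasDerivAt_sum_diag_sq hij (hsymm t)).deriv
  refine ⟨congrFun hderiv θ, ?_⟩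
  rw [hderiv, ((hflow θ).hasDerivAt_deriv_sum_diag_sq hij (hsymm θ)).deriv]

theorem stmt_7 {n : ℕ} (hn : 2 ≤ n) (W : Matrix (Fin n) (Fin n) ℝ) (hW : Wᵀ = W)
    (i j : Fin n) (hi : (i : ℕ) = 0) (hj : (j : ℕ) = 1)
    (T : ℝ → Matrix (Fin n) (Fin n) ℝ)
    (hT : ∀ θ, T θ = (givens i j θ)ᵀ * W * givens i j θ)
    (h : ℝ → ℝ) (hh : ∀ θ, h θ = ∑ s, (T θ s s) ^ 2) (θ : ℝ) :
    deriv h θ = 4 * (T θ i i * T θ i j - T θ i j * T θ j j) ∧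
    deriv (deriv h) θ =
      -4 * ((T θ i i) ^ 2 + (T θ j j) ^ 2 - 2 * T θ i i * T θ j j - 4 * (T θ i j) ^ 2) :=
  stmt_7_general W hW i j hi hj T hT h hh θ
end

section
/- Let n ≥ 2, d ≥ 1, and let A : (Fin d → Fin n) → ℝ be a symmetric d-th order tensor. Define f(Q) := Σ_{j=1}^n (W(Q)(j,…,j))², where W(Q)(i₁,…,i_d) := Σ_{p₁,…,p_d} A(p₁,…,p_d) Q_{p₁ i₁} ⋯ Q_{p_d i_d}. Then for every Q ∈ SO(n) and every pair 1 ≤ i < j ≤ n, there exists a real polynomial ρ of degree at most 2d such that for all x ∈ ℝ: f(Q G(i,j, arctan x)) = ρ(x) / (1 + x²)^d. -/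
open Matrix Real Filter Set

attribute [local instance] Matrix.frobeniusNormedAddCommGroup Matrix.frobeniusNormedSpace

/-!
With `x = tan θ` we have `cos θ = 1 / √(1 + x²)` and `sin θ = x / √(1 + x²)`, so right
multiplication by `G(i, j, θ)` turns columns `i` and `j` of `Q` into `(1 + x²)^(-1/2)` times a
vector affine in `x` and leaves the other columns alone. The map `v ↦ A(v, …, v)` is homogeneous
of degree `d`, so a rotated column contributes the square of a polynomial of degree `≤ d` divided
by `(1 + x²)ᵈ`, and an untouched column contributes a constant.
-/

open Polynomial

section TensorForm

variable {ι κ R : Type*} [Fintype ι] [Fintype κ] [DecidableEq κ] [CommSemiring R]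

def tensorForm (A : (κ → ι) → R) (v : ι → R) : R :=
  ∑ p, A p * ∏ k, v (p k)

theorem tensorForm_smul (A : (κ → ι) → R) (t : R) (v : ι → R) :
    tensorForm A (t • v) = t ^ Fintype.card κ * tensorForm A v := by
  simp only [tensorForm, Pi.smul_apply, smul_eq_mul, Finset.prod_mul_distrib,
    Finset.prod_const, Finset.card_univ, Finset.mul_sum]
  exact Finset.sum_congr rfl fun p _ => by ring

theorem exists_natDegree_le_eval_eq_tensorForm_add_smul (A : (κ → ι) → R) (a b : ι → R) :
    ∃ P : R[X], P.natDegree ≤ Fintype.card κ ∧ ∀ x, P.eval x = tensorForm A (a + x • b) := by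
  refine ⟨∑ p, C (A p) * ∏ k, (C (b (p k)) * X + C (a (p k))), ?_, fun x => ?_⟩
  · refine natDegree_sum_le_of_forall_le _ _ fun p _ => (natDegree_C_mul_le _ _).trans ?_
    refine (natDegree_prod_le _ _).trans ?_
    exact (Finset.sum_le_card_nsmul _ _ 1 fun k _ => natDegree_linear_le).trans (by simp)
  · simp only [tensorForm, eval_finsetSum, eval_mul, eval_C, eval_prod, eval_add, eval_X,
      Pi.add_apply, Pi.smul_apply, smul_eq_mul]
    exact Finset.sum_congr rfl fun p _ => by congr 1; exact Finset.prod_congr rfl fun k _ => by ring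

end TensorForm

theorem mul_givens_apply {n : ℕ} (Q : Matrix (Fin n) (Fin n) ℝ) {i j : Fin n} (hij : i ≠ j)
    (θ : ℝ) (k c : Fin n) :
    (Q * givens i j θ) k c =
      if c = i then Q k i * cos θ + Q k j * sin θ
      else if c = j then Q k j * cos θ - Q k i * sin θ
      else Q k c := by
  rw [Matrix.mul_apply]
  split_ifs with hci hcj
  · subst c
    rw [Fintype.sum_eq_add i j hij fun m ⟨hmi, hmj⟩ => by simp [givens, hmi, hmj]]
    simp [givens, hij, Ne.symm hij]
  · subst c
    rw [Fintype.sum_eq_add i j hij fun m ⟨hmi, hmj⟩ => by simp [givens, hmi, hmj]]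
    simp only [givens, of_apply, Ne.symm hij, hij, and_false, and_true, and_self, ↓reduceIte,
      mul_neg]
    ring
  · rw [Fintype.sum_eq_single c fun m hmc => by simp [givens, hci, hcj, hmc]]
    simp [givens, hci, hcj]

def IsPolyDivOnePlusSqPow (d : ℕ) (g : ℝ → ℝ) : Prop :=
  ∃ ρ : ℝ[X], ρ.natDegree ≤ 2 * d ∧ ∀ x, g x = ρ.eval x / (1 + x ^ 2) ^ d

namespace IsPolyDivOnePlusSqPow

theorem const (d : ℕ) (a : ℝ) : IsPolyDivOnePlusSqPow d fun _ => a := by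
  refine ⟨C a * (1 + X ^ 2) ^ d, (natDegree_C_mul_le _ _).trans ?_, fun x => ?_⟩
  · refine natDegree_pow_le.trans ?_
    have : (1 + X ^ 2 : ℝ[X]).natDegree ≤ 2 :=
      (natDegree_add_le _ _).trans (by simp)
    nlinarith
  · simp only [eval_mul, eval_C, eval_pow, eval_add, eval_one, eval_X]
    field_simp

theorem sum {ι : Type*} [Fintype ι] {d : ℕ} {g : ι → ℝ → ℝ}
    (h : ∀ c, IsPolyDivOnePlusSqPow d (g c)) :
    IsPolyDivOnePlusSqPow d fun x => ∑ c, g c x := by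
  choose ρ hdeg heq using h
  refine ⟨∑ c, ρ c, natDegree_sum_le_of_forall_le _ _ fun c _ => hdeg c, fun x => ?_⟩
  rw [eval_finsetSum, Finset.sum_div]
  exact Finset.sum_congr rfl fun c _ => heq c x

theorem sq_tensorForm {ι : Type*} [Fintype ι] {d : ℕ} (A : (Fin d → ι) → ℝ) (a b : ι → ℝ) :
    IsPolyDivOnePlusSqPow d fun x => tensorForm A ((√(1 + x ^ 2))⁻¹ • (a + x • b)) ^ 2 := by
  obtain ⟨P, hdeg, heval⟩ := exists_natDegree_le_eval_eq_tensorForm_add_smul A a b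
  refine ⟨P ^ 2, natDegree_pow_le.trans ?_, fun x => ?_⟩
  · rw [Fintype.card_fin] at hdeg
    omega
  · have hsq : √(1 + x ^ 2) ^ 2 = 1 + x ^ 2 := Real.sq_sqrt (by positivity)
    dsimp only
    rw [tensorForm_smul, Fintype.card_fin, ← heval, eval_pow, mul_pow, ← pow_mul, inv_pow,
      mul_comm d 2, pow_mul, hsq]
    ring

end IsPolyDivOnePlusSqPow

theorem stmt_16_general {n d : ℕ} (A : (Fin d → Fin n) → ℝ)
    (f : Matrix (Fin n) (Fin n) ℝ → ℝ)
    (hf : ∀ Q, f Q = ∑ j, (∑ p : Fin d → Fin n, A p * ∏ k, Q (p k) j) ^ 2)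
    (Q : Matrix (Fin n) (Fin n) ℝ)
    (i j : Fin n) (hij : i < j) :
    ∃ ρ : Polynomial ℝ, ρ.natDegree ≤ 2 * d ∧
      ∀ x : ℝ, f (Q * givens i j (Real.arctan x)) = ρ.eval x / (1 + x ^ 2) ^ d := by
  have hcol : ∀ x c, (fun k => (Q * givens i j (arctan x)) k c) =
      if c = i then (√(1 + x ^ 2))⁻¹ • (Qᵀ i + x • Qᵀ j)
      else if c = j then (√(1 + x ^ 2))⁻¹ • (Qᵀ j + x • -Qᵀ i)
      else Qᵀ c := by
    intro x c
    funext k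
    rw [mul_givens_apply Q hij.ne, cos_arctan, sin_arctan]
    split_ifs <;>
      simp only [one_div, smul_neg, Pi.smul_apply, Pi.add_apply, Pi.neg_apply, transpose_apply,
        smul_eq_mul] <;>
      ring
  suffices IsPolyDivOnePlusSqPow d fun x =>
      ∑ c, tensorForm A (fun k => (Q * givens i j (arctan x)) k c) ^ 2 by
    obtain ⟨ρ, hdeg, heq⟩ := this
    exact ⟨ρ, hdeg, fun x => by rw [hf]; exact heq x⟩
  refine IsPolyDivOnePlusSqPow.sum fun c => ?_
  simp only [hcol]
  split_ifs
  · exact IsPolyDivOnePlusSqPow.sq_tensorForm A _ _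
  · exact IsPolyDivOnePlusSqPow.sq_tensorForm A _ _
  · exact IsPolyDivOnePlusSqPow.const d _

theorem stmt_16 {n d : ℕ} (hn : 2 ≤ n) (hd : 1 ≤ d) (A : (Fin d → Fin n) → ℝ)
    (hsym : ∀ (p : Fin d → Fin n) (σ : Equiv.Perm (Fin d)), A (p ∘ σ) = A p)
    (f : Matrix (Fin n) (Fin n) ℝ → ℝ)
    (hf : ∀ Q, f Q = ∑ j, (∑ p : Fin d → Fin n, A p * ∏ k, Q (p k) j) ^ 2)
    (Q : Matrix (Fin n) (Fin n) ℝ) (hQ : Q ∈ SOn n)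
    (i j : Fin n) (hij : i < j) :
    ∃ ρ : Polynomial ℝ, ρ.natDegree ≤ 2 * d ∧
      ∀ x : ℝ, f (Q * givens i j (Real.arctan x)) = ρ.eval x / (1 + x ^ 2) ^ d :=
  stmt_16_general A f hf Q i j hij
end
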